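/- arXiv:2212.05329 — 4 statements merged into one kernel-verified Lean document; each statement's English description precedes it below -/
import Mathlib

section
/- A (p,q)-graph G is super edge-magic total if and only if there exists a bijection f from V(G) to {1,2,...,p} such that the set S = {f(u)+f(v) : uv ∈ E(G)} consists of q consecutive integers. In that case, f extends to a super edge-magic total labeling of G with magic constant c = p + q + min S. -/
/-- A super edge-magic total labeling of a graph `G` with `p = Fintype.card V` vertices and
`q = G.edgeSet.ncard` edges: `fv` maps the vertices bijectively onto `{1,…,p}`, `fe` maps the
edges bijectively onto `{p+1,…,p+q}` (so together they form a bijection of `V ∪ E` onto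
`{1,…,p+q}` with `f(V) = {1,…,p}`), and every edge `uv` satisfies `f(u)+f(v)+f(uv) = c`. -/
def IsSEMT {V : Type*} [Fintype V] (G : SimpleGraph V)
    (fv : V → ℕ) (fe : Sym2 V → ℕ) (c : ℕ) : Prop :=
  Set.BijOn fv Set.univ (Set.Icc 1 (Fintype.card V)) ∧
  Set.BijOn fe G.edgeSet
    (Set.Icc (Fintype.card V + 1) (Fintype.card V + G.edgeSet.ncard)) ∧
  ∀ u v, G.Adj u v → fv u + fv v + fe s(u, v) = c

lemma semt_key {V : Type*} [Fintype V] (G : SimpleGraph V) (fv : V → ℕ) (a : ℕ)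
    (hbij : Set.BijOn fv Set.univ (Set.Icc 1 (Fintype.card V)))
    (hS : {s | ∃ u v, G.Adj u v ∧ fv u + fv v = s} = Set.Ico a (a + G.edgeSet.ncard)) :
    ∃ fe, IsSEMT G fv fe (Fintype.card V + G.edgeSet.ncard + a) := by
  classical
  set p := Fintype.card V with hp
  set q := G.edgeSet.ncard with hq
  have hfin : G.edgeSet.Finite := Set.toFinite _
  set g : Sym2 V → ℕ := Sym2.lift ⟨fun u v => fv u + fv v, fun u v => add_comm _ _⟩ with hg
  have hgmk : ∀ u v : V, g s(u, v) = fv u + fv v := fun u v => rfl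
  have himg : g '' G.edgeSet = Set.Ico a (a + q) := by
    rw [← hS]
    ext s
    constructor
    · rintro ⟨e, he, rfl⟩
      induction e using Sym2.ind with
      | _ u v => exact ⟨u, v, he, rfl⟩
    · rintro ⟨u, v, huv, rfl⟩
      exact ⟨s(u, v), huv, rfl⟩
  have hmem : ∀ e ∈ G.edgeSet, a ≤ g e ∧ g e < a + q := by
    intro e he
    have : g e ∈ Set.Ico a (a + q) := himg ▸ Set.mem_image_of_mem g he
    exact ⟨this.1, this.2⟩
  have hcardIco : (Set.Ico a (a + q)).ncard = q := by
    rw [← Finset.coe_Ico, Set.ncard_coe_finset, Nat.card_Ico]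
    omega
  have hinj : Set.InjOn g G.edgeSet := by
    apply Set.injOn_of_ncard_image_eq _ hfin
    rw [himg, hcardIco]
  refine ⟨fun e => p + q + a - g e, hbij, ⟨?_, ?_, ?_⟩, ?_⟩
  · intro e he
    have := hmem e he
    simp only [Set.mem_Icc]
    omega
  · intro e1 h1 e2 h2 heq
    have b1 := hmem e1 h1
    have b2 := hmem e2 h2
    simp only at heq
    exact hinj h1 h2 (by omega)
  · intro y hy
    simp only [Set.mem_Icc] at hy
    have hx : p + q + a - y ∈ Set.Ico a (a + q) := by
      simp only [Set.mem_Ico]; omega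
    obtain ⟨e, heE, hge⟩ := himg ▸ hx
    refine ⟨e, heE, ?_⟩
    simp only
    rw [hge]
    omega
  · intro u v huv
    have := hmem s(u, v) huv
    rw [hgmk u v] at this
    simp only [hgmk]
    omega

/-- A `(p,q)`-graph `G` is super edge-magic total iff there is a bijection
`fv : V → {1,…,p}` whose multiset of edge sums `{fv u + fv v : uv ∈ E}` consists of `q`
consecutive integers; in that case any such `fv` extends to a super edge-magic total labeling
with magic constant `p + q + min S`. -/
theorem stmt_0 {V : Type*} [Fintype V] (G : SimpleGraph V) :
    ((∃ fv fe c, IsSEMT G fv fe c) ↔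
      ∃ (fv : V → ℕ) (a : ℕ),
        Set.BijOn fv Set.univ (Set.Icc 1 (Fintype.card V)) ∧
        {s | ∃ u v, G.Adj u v ∧ fv u + fv v = s} = Set.Ico a (a + G.edgeSet.ncard)) ∧
    (∀ (fv : V → ℕ) (a : ℕ),
      Set.BijOn fv Set.univ (Set.Icc 1 (Fintype.card V)) →
      {s | ∃ u v, G.Adj u v ∧ fv u + fv v = s} = Set.Ico a (a + G.edgeSet.ncard) →
      ∃ fe, IsSEMT G fv fe (Fintype.card V + G.edgeSet.ncard + a)) := by
  classical
  have hfin : G.edgeSet.Finite := Set.toFinite _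
  refine ⟨⟨?_, ?_⟩, fun fv a hbij hS => semt_key G fv a hbij hS⟩
  swap
  · rintro ⟨fv, a, hbij, hS⟩
    obtain ⟨fe, h⟩ := semt_key G fv a hbij hS
    exact ⟨fv, fe, _, h⟩
  · rintro ⟨fv, fe, c, hv, he, hm⟩
    refine ⟨fv, ?_⟩
    by_cases hq0 : G.edgeSet.ncard = 0
    · refine ⟨0, hv, ?_⟩
      have hempty : G.edgeSet = ∅ := (Set.ncard_eq_zero hfin).mp hq0
      ext s
      simp only [Set.mem_setOf_eq, hq0, Set.mem_Ico, Nat.add_zero]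
      constructor
      · rintro ⟨u, v, huv, rfl⟩
        exact absurd (G.mem_edgeSet.mpr huv) (by simp [hempty])
      · omega
    · have hq1 : 1 ≤ G.edgeSet.ncard := Nat.one_le_iff_ne_zero.mpr hq0
      obtain ⟨e, heE, hfe⟩ := he.surjOn (show Fintype.card V + G.edgeSet.ncard ∈
          Set.Icc (Fintype.card V + 1) (Fintype.card V + G.edgeSet.ncard) by
        simp only [Set.mem_Icc]; omega)
      induction e using Sym2.ind with
      | _ u v =>
      have huv : G.Adj u v := G.mem_edgeSet.mp heE
      have hc : fv u + fv v + (Fintype.card V + G.edgeSet.ncard) = c := by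
        have := hm u v huv
        omega
      refine ⟨fv u + fv v, hv, ?_⟩
      ext x
      simp only [Set.mem_setOf_eq, Set.mem_Ico]
      constructor
      · rintro ⟨u', v', h', rfl⟩
        have h1 := hm u' v' h'
        have h2 := he.mapsTo (G.mem_edgeSet.mpr h')
        simp only [Set.mem_Icc] at h2
        omega
      · intro hx
        have hk : c - x ∈ Set.Icc (Fintype.card V + 1)
            (Fintype.card V + G.edgeSet.ncard) := by
          simp only [Set.mem_Icc]; omega
        obtain ⟨e', he'E, hfe'⟩ := he.surjOn hk
        induction e' using Sym2.ind with
        | _ u' v' =>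
        have h' : G.Adj u' v' := G.mem_edgeSet.mp he'E
        have h1 := hm u' v' h'
        exact ⟨u', v', h', by omega⟩
end

section
/- For odd n ≥ 3, the super edge-magic total strength of the cycle C_n equals (5n+3)/2. -/
open Finset SimpleGraph

namespace Sym2

variable {α M : Type*} [AddCommMonoid M]

def sumMap (f : α → M) : Sym2 α → M :=
  Sym2.lift ⟨fun a b => f a + f b, fun _ _ => add_comm _ _⟩

@[simp]
theorem sumMap_mk (f : α → M) (a b : α) : sumMap f s(a, b) = f a + f b := rfl

end Sym2

namespace SimpleGraph

variable {V M : Type*} [Fintype V] [AddCommMonoid M] (G : SimpleGraph V) [DecidableRel G.Adj]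

theorem sum_edgeFinset_sumMap (w : V → M) :
    ∑ e ∈ G.edgeFinset, Sym2.sumMap w e = ∑ v, G.degree v • w v := by
  classical
  calc ∑ e ∈ G.edgeFinset, Sym2.sumMap w e
      = ∑ e ∈ G.edgeFinset, ∑ d : G.Dart with d.edge = e, w d.fst := by
        refine sum_congr rfl fun e he => ?_
        induction e with
        | _ u v =>
          let d : G.Dart := ⟨(u, v), G.mem_edgeFinset.1 he⟩
          rw [show s(u, v) = d.edge from rfl, Dart.edge_fiber, sum_pair d.symm_ne.symm]
          rfl
    _ = ∑ d : G.Dart, w d.fst :=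
        sum_fiberwise_of_maps_to (fun d _ => G.mem_edgeFinset.2 d.edge_mem) _
    _ = ∑ v, ∑ d : G.Dart with d.fst = v, w d.fst := (sum_fiberwise _ _ _).symm
    _ = ∑ v, G.degree v • w v := by
        refine sum_congr rfl fun v _ => ?_
        rw [sum_congr rfl fun d hd => congrArg w (mem_filter.1 hd).2, sum_const]
        congr 1
        convert G.dart_fst_fiber_card_eq_degree v

end SimpleGraph

theorem Finset.sum_Icc_id_mul_two (a b : ℕ) :
    (∑ i ∈ Icc (a + 1) (a + b), i) * 2 = b * (2 * a + b + 1) := by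
  induction b with
  | zero => simp
  | succ b ih =>
    rw [← add_assoc, sum_Icc_succ_top (by omega), add_mul, ih]
    ring

theorem Finset.sum_comp_of_bijOn {ι κ M : Type*} [AddCommMonoid M] {s : Finset ι} {t : Finset κ}
    {f : ι → κ} (hf : Set.BijOn f s t) (g : κ → M) : ∑ i ∈ s, g (f i) = ∑ j ∈ t, g j :=
  sum_nbij f (fun _ hi => hf.mapsTo hi) hf.injOn hf.surjOn fun _ _ => rfl

namespace IsSEMT

variable {V : Type*} [Fintype V] {G : SimpleGraph V} [DecidableRel G.Adj]
  {fv : V → ℕ} {fe : Sym2 V → ℕ} {c : ℕ}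

theorem ncard_edgeSet_mul {r : ℕ} (hG : G.IsRegularOfDegree r) (h : IsSEMT G fv fe c) :
    G.edgeSet.ncard * c = r * ∑ i ∈ Icc 1 (Fintype.card V), i +
      ∑ i ∈ Icc (Fintype.card V + 1) (Fintype.card V + G.edgeSet.ncard), i := by
  obtain ⟨hv, he, hmagic⟩ := h
  have hsum_fv : ∑ v, fv v = ∑ i ∈ Icc 1 (Fintype.card V), i :=
    sum_comp_of_bijOn (by rwa [coe_univ, coe_Icc]) id
  have hsum_fe : ∑ e ∈ G.edgeFinset, fe e =
      ∑ i ∈ Icc (Fintype.card V + 1) (Fintype.card V + G.edgeSet.ncard), i :=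
    sum_comp_of_bijOn (by rwa [coe_edgeFinset, coe_Icc]) id
  have hedge : ∀ e ∈ G.edgeFinset, Sym2.sumMap fv e + fe e = c := by
    intro e he
    induction e with
    | _ u v => exact hmagic u v (G.mem_edgeFinset.1 he)
  calc G.edgeSet.ncard * c = ∑ e ∈ G.edgeFinset, (Sym2.sumMap fv e + fe e) := by
        rw [sum_congr rfl hedge, sum_const, smul_eq_mul, ← coe_edgeFinset, Set.ncard_coe_finset]
    _ = r * ∑ i ∈ Icc 1 (Fintype.card V), i +
      ∑ i ∈ Icc (Fintype.card V + 1) (Fintype.card V + G.edgeSet.ncard), i := by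
        simp only [sum_add_distrib, G.sum_edgeFinset_sumMap, hG.degree_eq, smul_eq_mul, ← mul_sum,
          hsum_fv, hsum_fe]

end IsSEMT

/-- A vertex labeling whose edge sums are consecutive integers extends to a super edge-magic
total labeling (Figueroa-Centeno, Ichishima, Muntaner-Batle). -/
theorem isSEMT_of_bijOn_sumMap {V : Type*} [Fintype V] {G : SimpleGraph V} {fv : V → ℕ} {a : ℕ}
    (hv : Set.BijOn fv Set.univ (Set.Icc 1 (Fintype.card V)))
    (he : Set.BijOn (Sym2.sumMap fv) G.edgeSet (Set.Icc (a + 1) (a + G.edgeSet.ncard))) :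
    IsSEMT G fv (fun e => Fintype.card V + G.edgeSet.ncard + a + 1 - Sym2.sumMap fv e)
      (Fintype.card V + G.edgeSet.ncard + a + 1) := by
  have hflip : Set.BijOn (fun k => Fintype.card V + G.edgeSet.ncard + a + 1 - k)
      (Set.Icc (a + 1) (a + G.edgeSet.ncard))
      (Set.Icc (Fintype.card V + 1) (Fintype.card V + G.edgeSet.ncard)) := by
    refine ⟨fun k hk => ?_, fun k hk l hl hkl => ?_,
      fun k hk => ⟨Fintype.card V + G.edgeSet.ncard + a + 1 - k, ?_, ?_⟩⟩ <;>
      simp only [Set.mem_Icc] at * <;> omega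
  refine ⟨hv, hflip.comp he, fun u v huv => ?_⟩
  have hle := (he.mapsTo (show s(u, v) ∈ G.edgeSet from huv)).2
  simp only [Sym2.sumMap_mk] at hle ⊢
  omega

namespace SimpleGraph

theorem cycleGraph_isRegularOfDegree_two (n : ℕ) : (cycleGraph (n + 3)).IsRegularOfDegree 2 :=
  fun _ => cycleGraph_degree_three_le

theorem ncard_edgeSet_cycleGraph (n : ℕ) : (cycleGraph (n + 3)).edgeSet.ncard = n + 3 := by
  have := (cycleGraph (n + 3)).sum_degrees_eq_twice_card_edges
  simp only [cycleGraph_degree_three_le, sum_const, card_univ, Fintype.card_fin,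
    smul_eq_mul] at this
  rw [← coe_edgeFinset, Set.ncard_coe_finset]
  omega

theorem edgeSet_cycleGraph (n : ℕ) :
    (cycleGraph (n + 2)).edgeSet = Set.range fun i => s(i, i + 1) := by
  ext e
  induction e with
  | _ u v =>
    simp only [mem_edgeSet, cycleGraph_adj, Set.mem_range, Sym2.eq_iff]
    constructor
    · rintro (h | h)
      · exact ⟨v, Or.inr ⟨rfl, by rw [← h, add_sub_cancel]⟩⟩
      · exact ⟨u, Or.inl ⟨rfl, by rw [← h, add_sub_cancel]⟩⟩
    · rintro ⟨i, ⟨rfl, rfl⟩ | ⟨rfl, rfl⟩⟩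
      · right; simp
      · left; simp

end SimpleGraph

theorem IsSEMT.two_mul_eq_of_cycleGraph {n c : ℕ} {fv : Fin n → ℕ} {fe : Sym2 (Fin n) → ℕ}
    (hn : 3 ≤ n) (h : IsSEMT (cycleGraph n) fv fe c) : 2 * c = 5 * n + 3 := by
  obtain ⟨k, rfl⟩ := Nat.exists_eq_add_of_le' hn
  have hmul := h.ncard_edgeSet_mul (cycleGraph_isRegularOfDegree_two k)
  rw [Fintype.card_fin, ncard_edgeSet_cycleGraph] at hmul
  have hlow := sum_Icc_id_mul_two 0 (k + 3)
  have hhigh := sum_Icc_id_mul_two (k + 3) (k + 3)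
  rw [zero_add, zero_add] at hlow
  have : (k + 3) * (2 * c) = (k + 3) * (5 * (k + 3) + 3) := by nlinarith
  exact Nat.eq_of_mul_eq_mul_left (by omega) this

def cycleLabel (n : ℕ) (i : Fin n) : ℕ :=
  if i.val % 2 = 0 then i.val / 2 + 1 else (n + 3) / 2 + i.val / 2

theorem cycleLabel_bijOn {n : ℕ} (ho : Odd n) :
    Set.BijOn (cycleLabel n) Set.univ (Set.Icc 1 n) := by
  obtain ⟨k, rfl⟩ := ho
  refine ⟨fun i _ => ?_, fun i _ j _ hij => Fin.ext ?_, fun l hl => ?_⟩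
  · have := i.isLt
    simp only [Set.mem_Icc, cycleLabel]
    split_ifs <;> omega
  · have := i.isLt
    have := j.isLt
    simp only [cycleLabel] at hij
    split_ifs at hij <;> omega
  · simp only [Set.mem_Icc] at hl
    by_cases h : l ≤ k + 1
    · refine ⟨⟨2 * (l - 1), by omega⟩, Set.mem_univ _, ?_⟩
      simp only [cycleLabel]
      rw [if_pos (by omega)]
      omega
    · refine ⟨⟨2 * (l - k - 2) + 1, by omega⟩, Set.mem_univ _, ?_⟩
      simp only [cycleLabel]
      rw [if_neg (by omega)]
      omega

theorem sumMap_cycleLabel_succ (m : ℕ) (i : Fin (2 * m + 3)) :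
    Sym2.sumMap (cycleLabel (2 * m + 3)) s(i, i + 1) =
      if i = Fin.last _ then m + 3 else i + m + 4 := by
  have := i.isLt
  simp only [Sym2.sumMap_mk, cycleLabel, Fin.val_add_one, Fin.ext_iff, Fin.val_last]
  split_ifs <;> omega

theorem bijOn_sumMap_cycleLabel (m : ℕ) :
    Set.BijOn (Sym2.sumMap (cycleLabel (2 * m + 3))) (cycleGraph (2 * m + 3)).edgeSet
      (Set.Icc (m + 3) (3 * m + 5)) := by
  have h : Set.BijOn (fun i : Fin (2 * m + 3) => Sym2.sumMap (cycleLabel _) s(i, i + 1))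
      Set.univ (Set.Icc (m + 3) (3 * m + 5)) := by
    refine ⟨fun i _ => ?_, fun i _ j _ hij => ?_, fun l hl => ?_⟩
    · have := i.isLt
      simp only [sumMap_cycleLabel_succ, Set.mem_Icc, Fin.ext_iff, Fin.val_last]
      split_ifs <;> omega
    · have := i.isLt
      have := j.isLt
      simp only [sumMap_cycleLabel_succ, Fin.ext_iff, Fin.val_last] at hij ⊢
      split_ifs at hij <;> omega
    · simp only [Set.mem_Icc] at hl
      by_cases h : l = m + 3
      · exact ⟨Fin.last _, Set.mem_univ _, by
          simp only [sumMap_cycleLabel_succ, h, if_true]⟩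
      · refine ⟨⟨l - m - 4, by omega⟩, Set.mem_univ _, ?_⟩
        simp only [sumMap_cycleLabel_succ, Fin.ext_iff, Fin.val_last]
        rw [if_neg (by omega)]
        omega
  rw [edgeSet_cycleGraph, ← Set.image_univ]
  exact (Set.bijOn_comp_iff h.injOn.of_comp).1 h

theorem exists_isSEMT_cycleGraph {n : ℕ} (hn : 3 ≤ n) (ho : Odd n) :
    ∃ fv fe, IsSEMT (cycleGraph n) fv fe ((5 * n + 3) / 2) := by
  obtain ⟨m, rfl⟩ : ∃ m, n = 2 * m + 3 := ⟨(n - 3) / 2, by obtain ⟨k, hk⟩ := ho; omega⟩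
  have hv : Set.BijOn (cycleLabel (2 * m + 3)) Set.univ
      (Set.Icc 1 (Fintype.card (Fin (2 * m + 3)))) := by
    rw [Fintype.card_fin]
    exact cycleLabel_bijOn ho
  have he : Set.BijOn (Sym2.sumMap (cycleLabel (2 * m + 3))) (cycleGraph (2 * m + 3)).edgeSet
      (Set.Icc (m + 2 + 1) (m + 2 + (cycleGraph (2 * m + 3)).edgeSet.ncard)) := by
    rw [ncard_edgeSet_cycleGraph, show m + 2 + (2 * m + 3) = 3 * m + 5 by ring]
    exact bijOn_sumMap_cycleLabel m
  have hc : Fintype.card (Fin (2 * m + 3)) + (cycleGraph (2 * m + 3)).edgeSet.ncard + (m + 2) + 1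
      = (5 * (2 * m + 3) + 3) / 2 := by
    rw [Fintype.card_fin, ncard_edgeSet_cycleGraph]
    omega
  exact ⟨_, _, hc ▸ isSEMT_of_bijOn_sumMap hv he⟩

/-- For odd `n ≥ 3`, the super edge-magic total strength of the cycle `Cₙ` is `(5n+3)/2`. -/
theorem stmt_5 (n : ℕ) (hn : 3 ≤ n) (ho : Odd n) :
    sInf {c | ∃ fv fe, IsSEMT (SimpleGraph.cycleGraph n) fv fe c} = (5 * n + 3) / 2 := by
  have hset : {c | ∃ fv fe, IsSEMT (SimpleGraph.cycleGraph n) fv fe c} = {(5 * n + 3) / 2} := by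
    refine Set.eq_singleton_iff_unique_mem.2 ⟨exists_isSEMT_cycleGraph hn ho, ?_⟩
    rintro c ⟨fv, fe, h⟩
    have := h.two_mul_eq_of_cycleGraph hn
    omega
  rw [hset, csInf_singleton]
end

section
/- Let n = 2s+1 be odd and let G(n;k_1,...,k_n) be the unicyclic graph formed from an odd cycle a_1,...,a_n with k_i pendant vertices attached to a_i. Then G(n;k_1,...,k_n) is super edge-magic total and sm(G(n;k_1,...,k_n)) ≤ 2(k_1+k_3+...+k_{2s+1}) + 3(k_2+k_4+...+k_{2s}) + 2n + s + 2. -/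
/-- The unicyclic graph `G(n; k₁, …, kₙ)`: a cycle on `Fin n` (vertex `i` adjacent to `i+1 mod n`)
with `k i` pendant vertices attached to the cycle vertex `i`. -/
def pendantCycle (n : ℕ) (k : Fin n → ℕ) :
    SimpleGraph (Fin n ⊕ Σ i : Fin n, Fin (k i)) :=
  SimpleGraph.fromRel (fun a b =>
    (∃ i j : Fin n, a = Sum.inl i ∧ b = Sum.inl j ∧ (i.val + 1) % n = j.val) ∨
    (∃ (i : Fin n) (j : Fin (k i)), a = Sum.inr ⟨i, j⟩ ∧ b = Sum.inl i))

/-!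
Walk twice around the cycle, `r = 0, 1, …, 2n - 1`, handing out the labels `1, 2, …` in order:
at an even step `r` the cycle vertex `a_{r mod n}` gets the next label, at an odd step its
`k_{r mod n}` pendant vertices get the next labels. Since `n` is odd, `r` and `r + n` have
opposite parities, so every vertex is labelled exactly once and the labels are `1, …, p`.
Now list the edges as `a_{i-1} a_i` followed by the pendant edges at `a_i`, for `i = 0, …, n-1`:
along this list the edge sums increase by exactly one, starting from `ℓ + 1`, where
`ℓ = (n + 1)/2 + ∑_{i odd} k_i` (indices counted from `0`) is the number of labels handed out
in the first round.
Consecutive edge sums `m, …, m + q - 1` make `e ↦ p + q + m - (f u + f v)` an edge labelling,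
so `sm ≤ 2p + ℓ + 1`, which is the bound.
-/

open Finset

theorem sum_range_add_lt_sum_range {b : ℕ → ℕ} {i j m : ℕ} (hi : i < m) (hj : j < b i) :
    ∑ r ∈ range i, b r + j < ∑ r ∈ range m, b r :=
  calc ∑ r ∈ range i, b r + j < ∑ r ∈ range (i + 1), b r := by rw [sum_range_succ]; omega
    _ ≤ ∑ r ∈ range m, b r := sum_le_sum_of_subset (range_subset_range.2 hi)

theorem sum_range_add_inj {b : ℕ → ℕ} {i i' j j' : ℕ} (hj : j < b i) (hj' : j' < b i')
    (h : ∑ r ∈ range i, b r + j = ∑ r ∈ range i', b r + j') : i = i' ∧ j = j' := by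
  rcases lt_trichotomy i i' with hlt | rfl | hlt
  · have := sum_range_add_lt_sum_range hlt hj; omega
  · omega
  · have := sum_range_add_lt_sum_range hlt hj'; omega

theorem bijOn_sum_range_add {α : Type*} [Fintype α] (b : ℕ → ℕ) {m : ℕ} (slot offset : α → ℕ)
    (hinj : Function.Injective fun x => (slot x, offset x))
    (hslot : ∀ x, slot x < m) (hoffset : ∀ x, offset x < b (slot x))
    (hcard : Fintype.card α = ∑ r ∈ range m, b r) (a : ℕ) :
    Set.BijOn (fun x => a + (∑ r ∈ range (slot x), b r + offset x)) Set.univ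
      (Set.Ico a (a + Fintype.card α)) := by
  have hmaps : Set.MapsTo (fun x => a + (∑ r ∈ range (slot x), b r + offset x))
      (univ : Finset α) (Finset.Ico a (a + Fintype.card α)) := fun x _ => by
    have := sum_range_add_lt_sum_range (hslot x) (hoffset x)
    simp only [coe_Ico, Set.mem_Ico]
    omega
  have hinjOn : Set.InjOn (fun x => a + (∑ r ∈ range (slot x), b r + offset x))
      (univ : Finset α) := fun x _ y _ hxy => hinj <| Prod.ext_iff.2 <|
    sum_range_add_inj (hoffset x) (hoffset y) (Nat.add_left_cancel hxy)
  have hsurj := surjOn_of_injOn_of_card_le _ hmaps hinjOn (by simp)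
  simp only [coe_univ, coe_Ico] at hmaps hinjOn hsurj
  exact ⟨hmaps, hinjOn, hsurj⟩

theorem Nat.card_filter_even_range_two_mul_add_one (m : ℕ) :
    #{r ∈ range (2 * m + 1) | Even r} = m + 1 := by
  induction m with
  | zero => decide
  | succ m ih =>
    rw [show 2 * (m + 1) + 1 = 2 * m + 1 + 1 + 1 by ring, range_add_one, range_add_one,
      filter_insert, filter_insert]
    simp [ih, Nat.even_add_one, parity_simps]

theorem val_finRotate {n : ℕ} (i : Fin n) : (finRotate n i).val = (i.val + 1) % n := by
  obtain ⟨m, rfl⟩ : ∃ m, n = m + 1 := Nat.exists_eq_succ_of_ne_zero i.pos.ne'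
  rw [coe_finRotate]
  split_ifs with h
  · simp [h]
  · rw [Nat.mod_eq_of_lt (by have := Fin.val_lt_last h; omega)]

def edgeSum {V : Type*} (f : V → ℕ) : Sym2 V → ℕ :=
  Sym2.lift ⟨fun u v => f u + f v, fun _ _ => Nat.add_comm _ _⟩

theorem isSEMT_of_bijOn_edgeSum {V : Type*} [Fintype V] (G : SimpleGraph V) (f : V → ℕ) (m : ℕ)
    (hf : Set.BijOn f Set.univ (Set.Icc 1 (Fintype.card V)))
    (hsum : Set.BijOn (edgeSum f) G.edgeSet (Set.Ico m (m + G.edgeSet.ncard))) :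
    IsSEMT G f (fun e => Fintype.card V + G.edgeSet.ncard + m - edgeSum f e)
      (Fintype.card V + G.edgeSet.ncard + m) := by
  set c := Fintype.card V + G.edgeSet.ncard + m
  have hsub : Set.BijOn (c - ·) (Set.Ico m (m + G.edgeSet.ncard))
      (Set.Icc (Fintype.card V + 1) (Fintype.card V + G.edgeSet.ncard)) := by
    refine ⟨fun x hx => ?_, fun x hx y hy hxy => ?_, fun y hy => ⟨c - y, ?_, ?_⟩⟩ <;>
      simp only [Set.mem_Ico, Set.mem_Icc] at * <;> omega
  refine ⟨hf, hsub.comp hsum, fun u v huv => ?_⟩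
  have := hsum.mapsTo (G.mem_edgeSet.2 huv)
  simp only [edgeSum, Sym2.lift_mk, Set.mem_Ico] at this ⊢
  omega

namespace PendantCycle

variable {n : ℕ} (k : Fin n → ℕ)

abbrev Vertex := Fin n ⊕ Σ i : Fin n, Fin (k i)

def pendantCount (r : ℕ) : ℕ := if h : r < n then k ⟨r, h⟩ else 0

theorem pendantCount_val (i : Fin n) : pendantCount k i = k i := by
  simp [pendantCount]

theorem sum_pendantCount : ∑ r ∈ range n, pendantCount k r = ∑ i, k i := by
  rw [← Fin.sum_univ_eq_sum_range]
  exact sum_congr rfl fun i _ => pendantCount_val k i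

theorem sigma_eq_of_val_eq {i i' : Fin n} {j : Fin (k i)} {j' : Fin (k i')} (hi : i.val = i'.val)
    (hj : j.val = j'.val) : (⟨i, j⟩ : Σ i : Fin n, Fin (k i)) = ⟨i', j'⟩ := by
  obtain rfl := Fin.ext hi
  rw [Fin.ext hj]

theorem card_vertex : Fintype.card (Vertex k) = n + ∑ i, k i := by
  simp only [Fintype.card_sum, Fintype.card_sigma, Fintype.card_fin]

def next : Vertex k → Vertex k
  | .inl i => .inl (finRotate n i)
  | .inr ⟨i, _⟩ => .inl i

theorem pendantCycle_adj {a b : Vertex k} :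
    (pendantCycle n k).Adj a b ↔ a ≠ b ∧ (b = next k a ∨ a = next k b) := by
  have hrel (a b : Vertex k) :
      ((∃ i j : Fin n, a = .inl i ∧ b = .inl j ∧ (i.val + 1) % n = j.val) ∨
        ∃ (i : Fin n) (j : Fin (k i)), a = .inr ⟨i, j⟩ ∧ b = .inl i) ↔ b = next k a := by
    constructor
    · rintro (⟨i, j, rfl, rfl, h⟩ | ⟨i, j, rfl, rfl⟩)
      · exact congrArg _ (Fin.ext (by rw [val_finRotate, h]))
      · rfl
    · rcases a with i | ⟨i, j⟩ <;> rintro rfl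
      · exact .inl ⟨i, _, rfl, rfl, (val_finRotate i).symm⟩
      · exact .inr ⟨i, j, rfl, rfl⟩
  rw [pendantCycle, SimpleGraph.fromRel_adj, hrel, hrel]

theorem next_ne (hn : 2 ≤ n) (v : Vertex k) : next k v ≠ v := by
  rcases v with i | ⟨i, j⟩
  · intro h
    have := congrArg Fin.val (Sum.inl_injective h)
    rw [val_finRotate] at this
    rcases (by omega : i.val + 1 < n ∨ i.val + 1 = n) with hi | hi
    · rw [Nat.mod_eq_of_lt hi] at this; omega
    · rw [hi, Nat.mod_self] at this; omega
  · exact Sum.inl_ne_inr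

theorem next_next_ne (hn : 3 ≤ n) (v : Vertex k) : next k (next k v) ≠ v := by
  rcases v with i | ⟨i, j⟩
  · intro h
    have := congrArg Fin.val (Sum.inl_injective h)
    rw [val_finRotate, val_finRotate] at this
    rcases (by omega : i.val + 2 < n ∨ i.val + 2 = n ∨ i.val + 1 = n) with hi | hi | hi
    · rw [Nat.mod_eq_of_lt (by omega : i.val + 1 < n), Nat.mod_eq_of_lt hi] at this; omega
    · rw [Nat.mod_eq_of_lt (by omega : i.val + 1 < n), hi, Nat.mod_self] at this; omega
    · rw [hi, Nat.mod_self, Nat.mod_eq_of_lt (by omega : 0 + 1 < n)] at this; omega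
  · exact Sum.inl_ne_inr

theorem bijOn_edgeSet (hn : 3 ≤ n) :
    Set.BijOn (fun v => s(v, next k v)) Set.univ (pendantCycle n k).edgeSet := by
  refine ⟨fun v _ => ?_, fun v _ w _ h => ?_, fun e he => ?_⟩
  · exact (pendantCycle_adj k).2 ⟨(next_ne k (by omega) v).symm, .inl rfl⟩
  · rcases Sym2.eq_iff.1 h with ⟨h, -⟩ | ⟨rfl, h⟩
    · exact h
    · exact absurd h (next_next_ne k hn w)
  · induction e using Sym2.ind with
    | _ a b =>
      rw [SimpleGraph.mem_edgeSet, pendantCycle_adj] at he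
      rcases he.2 with h | h
      · exact ⟨a, trivial, by rw [h]⟩
      · exact ⟨b, trivial, by rw [h, Sym2.eq_swap]⟩

theorem ncard_edgeSet (hn : 3 ≤ n) :
    (pendantCycle n k).edgeSet.ncard = Fintype.card (Vertex k) := by
  rw [← (bijOn_edgeSet k hn).ncard_eq, Set.ncard_univ, Nat.card_eq_fintype_card]

def slot : Vertex k → ℕ
  | .inl i => if Even i.val then i else n + i
  | .inr ⟨i, _⟩ => if Even i.val then n + i else i

def offset : Vertex k → ℕ
  | .inl _ => 0
  | .inr ⟨_, j⟩ => j

def slotSize (r : ℕ) : ℕ := if Even r then 1 else pendantCount k (r % n)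

def label (v : Vertex k) : ℕ := 1 + (∑ r ∈ range (slot k v), slotSize k r + offset k v)

theorem slot_offset_injective : Function.Injective fun v => (slot k v, offset k v) := by
  rintro (i | ⟨i, j⟩) (i' | ⟨i', j'⟩) h <;>
    simp only [slot, offset, Prod.mk.injEq, Nat.even_iff] at h <;>
    have := i.isLt <;> have := i'.isLt
  · exact congrArg _ (Fin.ext (by split_ifs at h <;> omega))
  · split_ifs at h <;> omega
  · split_ifs at h <;> omega
  · exact congrArg _ (sigma_eq_of_val_eq k (by split_ifs at h <;> omega) (by omega))

theorem slot_lt (v : Vertex k) : slot k v < 2 * n := by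
  rcases v with i | ⟨i, j⟩ <;> simp only [slot] <;> split_ifs <;> omega

theorem offset_lt_slotSize (hn : Odd n) (v : Vertex k) : offset k v < slotSize k (slot k v) := by
  rw [Nat.odd_iff] at hn
  have hmod (i : Fin n) : (n + i.val) % n = i.val := by simp [Nat.mod_eq_of_lt i.isLt]
  rcases v with i | ⟨i, j⟩ <;> simp only [slot, offset, slotSize, Nat.even_iff] <;>
    split_ifs <;>
    first | omega | simp only [hmod, Nat.mod_eq_of_lt i.isLt, pendantCount_val, j.isLt]

theorem slotSize_of_even {r : ℕ} (hr : Even r) : slotSize k r = 1 := if_pos hr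

def edgeSlot : Vertex k → ℕ
  | .inl i => finRotate n i
  | .inr ⟨i, _⟩ => i

def edgeOffset : Vertex k → ℕ
  | .inl _ => 0
  | .inr ⟨_, j⟩ => j + 1

def edgeSlotSize (r : ℕ) : ℕ := pendantCount k r + 1

theorem edgeSlot_edgeOffset_injective :
    Function.Injective fun v => (edgeSlot k v, edgeOffset k v) := by
  rintro (i | ⟨i, j⟩) (i' | ⟨i', j'⟩) h <;>
    simp only [edgeSlot, edgeOffset, Prod.mk.injEq] at h
  · exact congrArg _ ((finRotate n).injective (Fin.ext h.1))
  · omega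
  · omega
  · exact congrArg _ (sigma_eq_of_val_eq k h.1 (by omega))

theorem edgeSlot_lt (v : Vertex k) : edgeSlot k v < n := by
  rcases v with i | ⟨i, j⟩
  exacts [(finRotate n i).isLt, i.isLt]

theorem edgeOffset_lt_edgeSlotSize (v : Vertex k) :
    edgeOffset k v < edgeSlotSize k (edgeSlot k v) := by
  rcases v with i | ⟨i, j⟩
  · exact Nat.succ_pos _
  · simp only [edgeOffset, edgeSlot, edgeSlotSize, pendantCount_val]
    omega

theorem card_vertex_eq_sum_edgeSlotSize :
    Fintype.card (Vertex k) = ∑ r ∈ range n, edgeSlotSize k r := by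
  simp only [card_vertex, edgeSlotSize, sum_add_distrib, sum_pendantCount, sum_const, card_range,
    smul_eq_mul, mul_one]
  ring

theorem slotSize_add_slotSize_add (hn : Odd n) {r : ℕ} (hr : r < n) :
    slotSize k r + slotSize k (n + r) = edgeSlotSize k r := by
  rw [Nat.odd_iff] at hn
  simp only [slotSize, edgeSlotSize, Nat.even_iff, Nat.add_mod_left, Nat.mod_eq_of_lt hr]
  split_ifs <;> omega

theorem sum_slotSize_add_sum_slotSize (hn : Odd n) {i : ℕ} (hi : i ≤ n) :
    ∑ r ∈ range i, slotSize k r + ∑ r ∈ range i, slotSize k (n + r) =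
      ∑ r ∈ range i, edgeSlotSize k r := by
  rw [← sum_add_distrib]
  exact sum_congr rfl fun r hr => slotSize_add_slotSize_add k hn ((mem_range.1 hr).trans_le hi)

theorem sum_slotSize (hn : Odd n) :
    ∑ r ∈ range (2 * n), slotSize k r = ∑ r ∈ range n, edgeSlotSize k r := by
  rw [two_mul, sum_range_add, sum_slotSize_add_sum_slotSize k hn le_rfl]

theorem label_bijOn (hn : Odd n) :
    Set.BijOn (label k) Set.univ (Set.Icc 1 (Fintype.card (Vertex k))) := by
  rw [← Set.Ico_add_one_right_eq_Icc, add_comm]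
  exact bijOn_sum_range_add (slotSize k) (slot k) (offset k) (slot_offset_injective k)
    (slot_lt k) (offset_lt_slotSize k hn)
    (by rw [card_vertex_eq_sum_edgeSlotSize, sum_slotSize k hn]) 1

theorem label_add_label_next (hn : Odd n) (v : Vertex k) :
    label k v + label k (next k v) = ∑ r ∈ range n, slotSize k r + 1 +
      (∑ r ∈ range (edgeSlot k v), edgeSlotSize k r + edgeOffset k v) := by
  have hsum {x : ℕ} (hx : x ≤ n) :
      ∑ r ∈ range x, slotSize k r + ∑ r ∈ range (n + x), slotSize k r =
        ∑ r ∈ range n, slotSize k r + ∑ r ∈ range x, edgeSlotSize k r := by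
    rw [sum_range_add, ← sum_slotSize_add_sum_slotSize k hn hx]
    ring
  have hparity := Nat.odd_iff.1 hn
  rcases v with i | ⟨i, j⟩
  · simp only [label, next, slot, offset, edgeSlot, edgeOffset, val_finRotate, Nat.even_iff]
    rcases (by omega : i.val + 1 < n ∨ i.val + 1 = n) with hi | hi
    · have key := hsum hi.le
      rw [Nat.mod_eq_of_lt hi]
      split_ifs with h h' <;> try omega
      · have := sum_range_succ (slotSize k) i
        rw [slotSize_of_even k (Nat.even_iff.2 h)] at this
        omega
      · have := sum_range_succ (slotSize k) (n + i)
        rw [slotSize_of_even k (Nat.even_iff.2 (by omega))] at this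
        rw [← add_assoc] at key
        omega
    · have key := hsum (le_refl n)
      have := sum_range_succ (slotSize k) i
      rw [slotSize_of_even k (Nat.even_iff.2 (by omega)), hi] at this
      simp only [hi, Nat.mod_self, Nat.zero_mod, if_pos, sum_range_zero]
      split_ifs <;> omega
  · simp only [label, next, slot, offset, edgeSlot, edgeOffset, Nat.even_iff]
    have := hsum i.isLt.le
    split_ifs <;> omega

theorem label_add_label_next_bijOn (hn : Odd n) :
    Set.BijOn (fun v => label k v + label k (next k v)) Set.univ
      (Set.Ico (∑ r ∈ range n, slotSize k r + 1)
        (∑ r ∈ range n, slotSize k r + 1 + Fintype.card (Vertex k))) := by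
  simp only [label_add_label_next k hn]
  exact bijOn_sum_range_add (edgeSlotSize k) (edgeSlot k) (edgeOffset k)
    (edgeSlot_edgeOffset_injective k) (edgeSlot_lt k) (edgeOffset_lt_edgeSlotSize k)
    (card_vertex_eq_sum_edgeSlotSize k) _

theorem isSEMT_label (hn : Odd n) (hn3 : 3 ≤ n) :
    ∃ fe, IsSEMT (pendantCycle n k) (label k) fe
      (2 * Fintype.card (Vertex k) + (∑ r ∈ range n, slotSize k r + 1)) := by
  have hE := bijOn_edgeSet k hn3
  have hsum : Set.BijOn (edgeSum (label k)) (pendantCycle n k).edgeSet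
      (Set.Ico (∑ r ∈ range n, slotSize k r + 1)
        (∑ r ∈ range n, slotSize k r + 1 + (pendantCycle n k).edgeSet.ncard)) := by
    rw [ncard_edgeSet k hn3, ← hE.image_eq, ← Set.bijOn_comp_iff hE.injOn]
    exact label_add_label_next_bijOn k hn
  have := isSEMT_of_bijOn_edgeSum _ _ _ (label_bijOn k hn) hsum
  rw [ncard_edgeSet k hn3, ← two_mul] at this
  exact ⟨_, this⟩

theorem sum_range_slotSize :
    ∑ r ∈ range n, slotSize k r = #{r ∈ range n | Even r} + ∑ i with ¬ Even i.val, k i := by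
  have hk (i : Fin n) : (if ¬ Even i.val then k i else 0) =
      if ¬ Even i.val then pendantCount k i else 0 := by rw [pendantCount_val]
  rw [sum_filter, sum_congr rfl fun i _ => hk i,
    Fin.sum_univ_eq_sum_range (fun r => if ¬ Even r then pendantCount k r else 0), card_filter,
    ← sum_add_distrib]
  refine sum_congr rfl fun r hr => ?_
  rw [mem_range] at hr
  simp only [slotSize, Nat.mod_eq_of_lt hr]
  split_ifs <;> simp only [add_zero, zero_add]

end PendantCycle

/-- The unicyclic graph `G(n; k₁,…,kₙ)` with `n = 2s+1` is super edge-magic total, and its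
strength is at most `2(k₁+k₃+⋯+k_{2s+1}) + 3(k₂+k₄+⋯+k_{2s}) + 2n + s + 2`.
(Here vertex `i : Fin n` corresponds to `a_{i+1}`, so `a_i` with odd `i` corresponds to even
`i.val`.) -/
theorem stmt_6 (s : ℕ) (hs : 1 ≤ s) (k : Fin (2 * s + 1) → ℕ) :
    (∃ fv fe c, IsSEMT (pendantCycle (2 * s + 1) k) fv fe c) ∧
    sInf {c | ∃ fv fe, IsSEMT (pendantCycle (2 * s + 1) k) fv fe c} ≤
      2 * (∑ i ∈ Finset.univ.filter (fun i : Fin (2 * s + 1) => Even i.val), k i) +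
      3 * (∑ i ∈ Finset.univ.filter (fun i : Fin (2 * s + 1) => ¬ Even i.val), k i) +
      2 * (2 * s + 1) + s + 2 := by
  obtain ⟨fe, hfe⟩ := PendantCycle.isSEMT_label k (odd_two_mul_add_one s) (by omega)
  refine ⟨⟨_, _, _, hfe⟩, (Nat.sInf_le (by exact ⟨_, _, hfe⟩)).trans_eq ?_⟩
  rw [PendantCycle.sum_range_slotSize, Nat.card_filter_even_range_two_mul_add_one,
    PendantCycle.card_vertex,
    ← sum_filter_add_sum_filter_not univ (fun i : Fin (2 * s + 1) => Even i.val)]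
  ring
end

section
/- Let G_p be a connected super edge-magic total (p,q)-graph with p ≥ 3, let f be a super edge-magic total labeling of G_p, and let t be such that max{f(u)+f(v) : uv ∈ E(G_p)} = p + t and f(a) = t for some vertex a. Then for every m ≥ 1, the graph obtained from G_p by adding m new vertices each joined by an edge only to a is also super edge-magic total. -/
set_option maxHeartbeats 1000000 in
/-- If `G` is a connected super edge-magic total graph with `p ≥ 3`, `f` a super edge-magic
total labeling whose maximal edge sum is `p + t` with `fv a = t` for some vertex `a`, then the
graph obtained by joining `m ≥ 1` new vertices to `a` is also super edge-magic total. -/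
theorem stmt_17 {V : Type*} [Fintype V] (G : SimpleGraph V)
    (hp : 3 ≤ Fintype.card V) (hconn : G.Connected)
    (fv : V → ℕ) (fe : Sym2 V → ℕ) (c : ℕ) (h : IsSEMT G fv fe c)
    (t : ℕ) (a : V)
    (hmax : sSup {s | ∃ u v, G.Adj u v ∧ fv u + fv v = s} = Fintype.card V + t)
    (ha : fv a = t) (m : ℕ) (hm : 1 ≤ m) :
    ∃ fv' fe' c',
      IsSEMT (SimpleGraph.fromRel (fun x y : V ⊕ Fin m =>
        (∃ u v, x = Sum.inl u ∧ y = Sum.inl v ∧ G.Adj u v) ∨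
        (∃ j, x = Sum.inl a ∧ y = Sum.inr j))) fv' fe' c' := by
  classical
  obtain ⟨hfv, hfe, hmagic⟩ := h
  set p := Fintype.card V with hpdef
  set q := G.edgeSet.ncard with hqdef
  -- basic facts
  have hne : G.edgeSet.Nonempty := by
    by_contra hne
    rw [Set.not_nonempty_iff_eq_empty, SimpleGraph.edgeSet_eq_empty] at hne
    subst hne
    obtain ⟨u, v, huv⟩ := Fintype.exists_pair_of_one_lt_card (α := V) (by omega)
    exact huv ((SimpleGraph.reachable_bot.mp (hconn u v)))
  have hq1 : 1 ≤ q := (Set.ncard_pos G.edgeSet.toFinite).mpr hne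
  have htmem : fv a ∈ Set.Icc 1 p := hfv.mapsTo (Set.mem_univ a)
  have ht1 : 1 ≤ t := by rw [ha] at htmem; exact htmem.1
  have htp : t ≤ p := by rw [ha] at htmem; exact htmem.2
  -- the sum function on Sym2
  set sumV : Sym2 V → ℕ := Sym2.lift ⟨fun x y => fv x + fv y, fun _ _ => add_comm _ _⟩ with hsumV
  have hsum_fe : ∀ e ∈ G.edgeSet, sumV e + fe e = c := by
    intro e he
    induction e using Sym2.ind with
    | _ u v => simpa [hsumV] using hmagic u v he
  have hfe_mem : ∀ e ∈ G.edgeSet, fe e ∈ Set.Icc (p+1) (p+q) := fun e he => hfe.mapsTo he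
  -- c ≥ p + q
  have hc : p + q ≤ c := by
    obtain ⟨e, he, hfee⟩ := hfe.surjOn (Set.mem_Icc.mpr ⟨by omega, le_refl (p+q)⟩)
    have := hsum_fe e he
    omega
  -- the set of edge sums
  have hA : {s | ∃ u v, G.Adj u v ∧ fv u + fv v = s} = Set.Icc (c - (p+q)) (c - (p+1)) := by
    ext s
    constructor
    · rintro ⟨u, v, huv, rfl⟩
      have he : s(u,v) ∈ G.edgeSet := huv
      have h1 := hsum_fe _ he
      have h2 := hfe_mem _ he
      simp only [hsumV, Sym2.lift_mk] at h1
      simp only [Set.mem_Icc] at h2 ⊢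
      omega
    · rintro hs
      simp only [Set.mem_Icc] at hs
      obtain ⟨e, he, hfee⟩ := hfe.surjOn (Set.mem_Icc.mpr (⟨by omega, by omega⟩ : p + 1 ≤ c - s ∧ c - s ≤ p + q))
      induction e using Sym2.ind with
      | _ u v =>
        refine ⟨u, v, he, ?_⟩
        have h1 := hsum_fe _ he
        simp only [hsumV, Sym2.lift_mk] at h1
        omega
  have hcc : c = 2*p + t + 1 := by
    rw [hA, csSup_Icc (by omega)] at hmax
    omega
  -- bound on old edge sums
  have hsum_le : ∀ u v, G.Adj u v → fv u + fv v ≤ p + t := by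
    intro u v huv
    have : fv u + fv v ∈ Set.Icc (c - (p+q)) (c - (p+1)) := by
      rw [← hA]; exact ⟨u, v, huv, rfl⟩
    simp only [Set.mem_Icc] at this
    omega
  have hsum_ge : ∀ u v, G.Adj u v → c - (p + q) ≤ fv u + fv v := by
    intro u v huv
    have : fv u + fv v ∈ Set.Icc (c - (p+q)) (c - (p+1)) := by
      rw [← hA]; exact ⟨u, v, huv, rfl⟩
    exact this.1
  -- the new graph
  set r : V ⊕ Fin m → V ⊕ Fin m → Prop := fun x y =>
        (∃ u v, x = Sum.inl u ∧ y = Sum.inl v ∧ G.Adj u v) ∨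
        (∃ j, x = Sum.inl a ∧ y = Sum.inr j) with hr
  set G' : SimpleGraph (V ⊕ Fin m) := SimpleGraph.fromRel r with hG'
  have cardW : Fintype.card (V ⊕ Fin m) = p + m := by
    simp [Fintype.card_sum, hpdef]
  have adj_ll : ∀ u v : V, G'.Adj (Sum.inl u) (Sum.inl v) ↔ G.Adj u v := by
    intro u v
    simp only [hG', SimpleGraph.fromRel_adj, hr]
    constructor
    · rintro ⟨hne, (⟨u', v', h1, h2, h3⟩ | ⟨j, h1, h2⟩) | (⟨u', v', h1, h2, h3⟩ | ⟨j, h1, h2⟩)⟩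
      · cases h1; cases h2; exact h3
      · exact absurd h2 (by simp)
      · cases h1; cases h2; exact h3.symm
      · exact absurd h2 (by simp)
    · intro huv
      exact ⟨by simpa using huv.ne, Or.inl (Or.inl ⟨u, v, rfl, rfl, huv⟩)⟩
  have adj_lr : ∀ (u : V) (j : Fin m), G'.Adj (Sum.inl u) (Sum.inr j) ↔ u = a := by
    intro u j
    simp only [hG', SimpleGraph.fromRel_adj, hr]
    constructor
    · rintro ⟨hne, (⟨u', v', h1, h2, h3⟩ | ⟨j', h1, h2⟩) | (⟨u', v', h1, h2, h3⟩ | ⟨j', h1, h2⟩)⟩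
      · exact absurd h2 (by simp)
      · exact Sum.inl.inj h1
      · exact absurd h1 (by simp)
      · exact absurd h1 (by simp)
    · rintro rfl
      exact ⟨by simp, Or.inl (Or.inr ⟨j, rfl, rfl⟩)⟩
  have adj_rr : ∀ i j : Fin m, ¬ G'.Adj (Sum.inr i) (Sum.inr j) := by
    intro i j
    simp only [hG', SimpleGraph.fromRel_adj, hr]
    rintro ⟨hne, (⟨u', v', h1, h2, h3⟩ | ⟨j', h1, h2⟩) | (⟨u', v', h1, h2, h3⟩ | ⟨j', h1, h2⟩)⟩ <;>
      simp_all
  -- edge set of the new graph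
  have hE' : G'.edgeSet = (Sym2.map Sum.inl '' G.edgeSet) ∪
      ((fun j : Fin m => s(Sum.inl a, Sum.inr j)) '' Set.univ) := by
    ext e
    induction e using Sym2.ind with
    | _ x y =>
      cases x with
      | inl u =>
        cases y with
        | inl v =>
          simp only [SimpleGraph.mem_edgeSet, adj_ll, Set.mem_union, Set.mem_image,
            Set.mem_univ, true_and]
          constructor
          · intro huv
            exact Or.inl ⟨s(u,v), huv, by simp⟩
          · rintro (⟨e, he, heq⟩ | ⟨j, heq⟩)
            · induction e using Sym2.ind with
              | _ u' v' =>
                simp only [Sym2.map_pair_eq, Sym2.eq, Sym2.rel_iff', Prod.mk.injEq,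
                  Prod.swap_prod_mk, Sum.inl.injEq] at heq
                rcases heq with ⟨rfl, rfl⟩ | ⟨rfl, rfl⟩
                · exact he
                · exact (he).symm
            · simp only [Sym2.eq, Sym2.rel_iff', Prod.mk.injEq, Prod.swap_prod_mk] at heq
              rcases heq with ⟨h1, h2⟩ | ⟨h1, h2⟩ <;>
                first | exact absurd h1 Sum.inl_ne_inr | exact absurd h1 Sum.inr_ne_inl
                      | exact absurd h2 Sum.inl_ne_inr | exact absurd h2 Sum.inr_ne_inl
                      | exact Sum.inl.inj h1 | exact (Sum.inl.inj h1).symm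
                      | exact Sum.inl.inj h2 | exact (Sum.inl.inj h2).symm
        | inr j =>
          simp only [SimpleGraph.mem_edgeSet, adj_lr, Set.mem_union, Set.mem_image,
            Set.mem_univ, true_and]
          constructor
          · rintro rfl
            exact Or.inr ⟨j, by simp⟩
          · rintro (⟨e, he, heq⟩ | ⟨j', heq⟩)
            · exfalso
              have : (Sum.inr j : V ⊕ Fin m) ∈ Sym2.map Sum.inl e := by
                rw [heq]; simp
              rw [Sym2.mem_map] at this
              obtain ⟨x, _, hx⟩ := this
              simp at hx
            · simp only [Sym2.eq, Sym2.rel_iff', Prod.mk.injEq, Prod.swap_prod_mk] at heq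
              rcases heq with ⟨h1, h2⟩ | ⟨h1, h2⟩ <;>
                first | exact absurd h1 Sum.inl_ne_inr | exact absurd h1 Sum.inr_ne_inl
                      | exact absurd h2 Sum.inl_ne_inr | exact absurd h2 Sum.inr_ne_inl
                      | exact Sum.inl.inj h1 | exact (Sum.inl.inj h1).symm
                      | exact Sum.inl.inj h2 | exact (Sum.inl.inj h2).symm
      | inr i =>
        cases y with
        | inl v =>
          simp only [SimpleGraph.mem_edgeSet, Set.mem_union, Set.mem_image,
            Set.mem_univ, true_and]
          rw [show (s(Sum.inr i, Sum.inl v) : Sym2 (V ⊕ Fin m)) = s(Sum.inl v, Sum.inr i) from Sym2.eq_swap]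
          rw [show (G'.Adj (Sum.inr i) (Sum.inl v)) = (G'.Adj (Sum.inl v) (Sum.inr i)) from propext ⟨fun h => h.symm, fun h => h.symm⟩]
          rw [adj_lr]
          constructor
          · rintro rfl
            exact Or.inr ⟨i, by simp⟩
          · rintro (⟨e, he, heq⟩ | ⟨j', heq⟩)
            · exfalso
              have : (Sum.inr i : V ⊕ Fin m) ∈ Sym2.map Sum.inl e := by
                rw [heq]; simp
              rw [Sym2.mem_map] at this
              obtain ⟨x, _, hx⟩ := this
              simp at hx
            · simp only [Sym2.eq, Sym2.rel_iff', Prod.mk.injEq, Prod.swap_prod_mk] at heq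
              rcases heq with ⟨h1, h2⟩ | ⟨h1, h2⟩ <;>
                first | exact absurd h1 Sum.inl_ne_inr | exact absurd h1 Sum.inr_ne_inl
                      | exact absurd h2 Sum.inl_ne_inr | exact absurd h2 Sum.inr_ne_inl
                      | exact Sum.inl.inj h1 | exact (Sum.inl.inj h1).symm
                      | exact Sum.inl.inj h2 | exact (Sum.inl.inj h2).symm
        | inr j =>
          simp only [SimpleGraph.mem_edgeSet, Set.mem_union, Set.mem_image,
            Set.mem_univ, true_and]
          constructor
          · intro hadj; exact absurd hadj (adj_rr i j)
          · rintro (⟨e, he, heq⟩ | ⟨j', heq⟩)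
            · exfalso
              have : (Sum.inr i : V ⊕ Fin m) ∈ Sym2.map Sum.inl e := by
                rw [heq]; simp
              rw [Sym2.mem_map] at this
              obtain ⟨x, _, hx⟩ := this
              simp at hx
            · simp only [Sym2.eq, Sym2.rel_iff', Prod.mk.injEq, Prod.swap_prod_mk] at heq
              rcases heq with ⟨h1, h2⟩ | ⟨h1, h2⟩ <;>
                first | exact absurd h1 Sum.inl_ne_inr | exact absurd h1 Sum.inr_ne_inl
                      | exact absurd h2 Sum.inl_ne_inr | exact absurd h2 Sum.inr_ne_inl
                      | exact Sum.inl.inj h1 | exact (Sum.inl.inj h1).symm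
                      | exact Sum.inl.inj h2 | exact (Sum.inl.inj h2).symm
  -- cardinalities
  have hmapinj : Function.Injective (Sym2.map (Sum.inl : V → V ⊕ Fin m)) :=
    Sym2.map.injective Sum.inl_injective
  have hinj2 : Function.Injective (fun j : Fin m => s(Sum.inl a, Sum.inr j)) := by
    intro i j hij
    simp only [Sym2.congr_right] at hij
    exact Sum.inr.inj hij
  have hdisj : Disjoint (Sym2.map Sum.inl '' G.edgeSet)
      ((fun j : Fin m => s(Sum.inl a, Sum.inr j)) '' Set.univ) := by
    rw [Set.disjoint_left]
    rintro e ⟨e0, he0, rfl⟩ ⟨j, -, heq⟩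
    have : (Sum.inr j : V ⊕ Fin m) ∈ Sym2.map Sum.inl e0 := by
      rw [← heq]; simp
    rw [Sym2.mem_map] at this
    obtain ⟨x, -, hx⟩ := this
    exact Sum.inl_ne_inr hx
  have hQ' : G'.edgeSet.ncard = q + m := by
    rw [hE', Set.ncard_union_eq hdisj (Set.toFinite _) (Set.toFinite _),
      Set.ncard_image_of_injective _ hmapinj, Set.ncard_image_of_injective _ hinj2]
    simp [Set.ncard_univ, hqdef]
  -- new vertex labeling
  set fv' : V ⊕ Fin m → ℕ := Sum.elim fv (fun j => p + 1 + j) with hfv'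
  have hfvle : ∀ u : V, 1 ≤ fv u ∧ fv u ≤ p := by
    intro u
    have := hfv.mapsTo (Set.mem_univ u)
    exact ⟨this.1, this.2⟩
  have hfv'_bij : Set.BijOn fv' Set.univ (Set.Icc 1 (p + m)) := by
    refine ⟨?_, ?_, ?_⟩
    · rintro (u | j) -
      · have := hfvle u
        simp only [hfv', Sum.elim_inl, Set.mem_Icc]
        omega
      · have := j.2
        simp only [hfv', Sum.elim_inr, Set.mem_Icc]
        omega
    · rintro (u | i) - (v | j) - hxy <;>
        simp only [hfv', Sum.elim_inl, Sum.elim_inr] at hxy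
      · rw [hfv.injOn (Set.mem_univ u) (Set.mem_univ v) hxy]
      · exact absurd hxy (by have := hfvle u; omega)
      · exact absurd hxy (by have := hfvle v; omega)
      · have : (i : ℕ) = j := by omega
        rw [Fin.ext this]
    · intro y hy
      simp only [Set.mem_Icc] at hy
      by_cases hyp : y ≤ p
      · obtain ⟨u, -, hu⟩ := hfv.surjOn (Set.mem_Icc.mpr ⟨hy.1, hyp⟩)
        exact ⟨Sum.inl u, Set.mem_univ _, hu⟩
      · refine ⟨Sum.inr ⟨y - p - 1, by omega⟩, Set.mem_univ _, ?_⟩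
        simp only [hfv', Sum.elim_inr]
        omega
  -- the new edge labeling
  set c' : ℕ := 2*p + 2*m + t + 1 with hc'
  set sumW : Sym2 (V ⊕ Fin m) → ℕ :=
    Sym2.lift ⟨fun x y => fv' x + fv' y, fun _ _ => add_comm _ _⟩ with hsumW
  set fe2 : Sym2 (V ⊕ Fin m) → ℕ := fun e => c' - sumW e with hfe2
  have hsumW_old : ∀ e, sumW (Sym2.map Sum.inl e) = sumV e := by
    intro e
    induction e using Sym2.ind with
    | _ u v => simp [hsumW, hsumV, hfv']
  have hsumW_new : ∀ j : Fin m, sumW s(Sum.inl a, Sum.inr j) = t + (p + 1 + j) := by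
    intro j
    simp [hsumW, hfv', ha]
  have hsumV_mem : ∀ e ∈ G.edgeSet, c - (p + q) ≤ sumV e ∧ sumV e ≤ p + t := by
    intro e he
    have h1 := hsum_fe e he
    have h2 := hfe_mem e he
    simp only [Set.mem_Icc] at h2
    omega
  -- conclusion
  refine ⟨fv', fe2, c', ?_, ?_, ?_⟩
  · rw [cardW]
    exact hfv'_bij
  · rw [cardW, hQ']
    refine ⟨?_, ?_, ?_⟩
    · -- MapsTo
      intro e he
      rw [hE'] at he
      rcases he with ⟨e0, he0, rfl⟩ | ⟨j, -, rfl⟩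
      · have h1 := hsumV_mem e0 he0
        simp only [hfe2, hsumW_old, Set.mem_Icc]
        omega
      · have := j.2
        simp only [hfe2, hsumW_new, Set.mem_Icc]
        omega
    · -- InjOn
      intro e1 he1 e2 he2 heq
      rw [hE'] at he1 he2
      rcases he1 with ⟨a1, ha1, rfl⟩ | ⟨j1, -, rfl⟩ <;>
        rcases he2 with ⟨a2, ha2, rfl⟩ | ⟨j2, -, rfl⟩
      · have h1 := hsumV_mem a1 ha1
        have h2 := hsumV_mem a2 ha2
        simp only [hfe2, hsumW_old] at heq
        have hsum : sumV a1 = sumV a2 := by omega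
        have hfeeq : fe a1 = fe a2 := by
          have := hsum_fe a1 ha1
          have := hsum_fe a2 ha2
          omega
        rw [hfe.injOn ha1 ha2 hfeeq]
      · have h1 := hsumV_mem a1 ha1
        have h2 := j2.2
        simp only [hfe2, hsumW_old, hsumW_new] at heq
        exfalso; omega
      · have h1 := hsumV_mem a2 ha2
        have h2 := j1.2
        simp only [hfe2, hsumW_old, hsumW_new] at heq
        exfalso; omega
      · have h1 := j1.2
        have h2 := j2.2
        simp only [hfe2, hsumW_new] at heq
        have : (j1 : ℕ) = j2 := by omega
        rw [Fin.ext this]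
    · -- SurjOn
      intro y hy
      simp only [Set.mem_Icc] at hy
      by_cases hcase : c' - y ≤ p + t
      · -- comes from an old edge
        have hmem : c' - y ∈ Set.Icc (c - (p + q)) (c - (p + 1)) := by
          simp only [Set.mem_Icc]
          omega
        rw [← hA] at hmem
        obtain ⟨u, v, huv, hsum⟩ := hmem
        refine ⟨s(Sum.inl u, Sum.inl v), ?_, ?_⟩
        · rw [hE']
          exact Or.inl ⟨s(u, v), huv, by simp⟩
        · simp only [hfe2, hsumW, Sym2.lift_mk, hfv', Sum.elim_inl, hsum]
          omega
      · -- comes from a new edge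
        push_neg at hcase
        have hjm : c' - y - (p + t + 1) < m := by omega
        refine ⟨s(Sum.inl a, Sum.inr ⟨c' - y - (p + t + 1), hjm⟩), ?_, ?_⟩
        · have : s(Sum.inl a, (Sum.inr ⟨c' - y - (p + t + 1), hjm⟩ : V ⊕ Fin m)) ∈
              Sym2.map Sum.inl '' G.edgeSet ∪
              (fun j : Fin m => s(Sum.inl a, Sum.inr j)) '' Set.univ :=
            Or.inr ⟨_, Set.mem_univ _, rfl⟩
          rwa [← hE'] at this
        · rw [hfe2]
          simp only [hsumW_new]
          omega
  · -- magic condition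
    rintro (u | i) (v | j) hxy
    · have huv := (adj_ll u v).mp hxy
      have hle := hsum_le u v huv
      simp only [hfe2, hsumW, Sym2.lift_mk, hfv', Sum.elim_inl]
      omega
    · obtain rfl := (adj_lr u j).mp hxy
      have := j.2
      simp only [hfe2, hsumW, Sym2.lift_mk, hfv', Sum.elim_inl, Sum.elim_inr, ha]
      omega
    · obtain rfl := (adj_lr v i).mp hxy.symm
      have := i.2
      simp only [hfe2, hsumW, Sym2.lift_mk, hfv', Sum.elim_inl, Sum.elim_inr, ha]
      omega
    · exact absurd hxy (adj_rr i j)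
end
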